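/- arXiv:1804.02795 — 2 statements merged into one kernel-verified Lean document; each statement's English description precedes it below -/
import Mathlib

section
/- Let p* ∈ ℝ^{nd} be a target configuration, T* a set of triples, δ(p) = r(p) − r(p*), and consider the gradient flow ṗ = −R_w(p)ᵀ δ(p) (i.e., ṗ = −∇_p V(p) with V(p) = ½‖δ(p)‖²). Along any solution t ↦ p(t): (ii) the centroid (1/n) Σ_{i=1}^n p_i(t) is constant in t; and (iii) the rank of the d×n matrix P(t) = (p_1(t), …, p_n(t)) is constant in t. -/
open RealInnerProductSpace Topology

/-- The configuration space of `n` agents in `ℝ^d`, with its Euclidean (ℓ²) structure. -/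
abbrev Conf (n d : ℕ) := PiLp 2 (fun _ : Fin n => EuclideanSpace ℝ (Fin d))

open Classical in
/-- The weak rigidity function on configuration space: components
`⟪q i - q j, q i - q k⟫` for triples `(i,j,k) ∈ T` (components outside `T` are
constantly `0`). -/
noncomputable def weakRigidityFun {n d : ℕ} (T : Set (Fin n × Fin n × Fin n))
    (q : Conf n d) : EuclideanSpace ℝ (Fin n × Fin n × Fin n) :=
  WithLp.toLp 2 (fun t => if t ∈ T then ⟪q t.1 - q t.2.1, q t.1 - q t.2.2⟫ else 0)

/-- A valid set of triples for the graph `G`: each `(i,j,k) ∈ T` satisfies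
`(i,j), (i,k) ∈ E` and `j ≤ k`. -/
def ValidTriples {n : ℕ} (G : SimpleGraph (Fin n)) (T : Set (Fin n × Fin n × Fin n)) : Prop :=
  ∀ t ∈ T, G.Adj t.1 t.2.1 ∧ G.Adj t.1 t.2.2 ∧ t.2.1 ≤ t.2.2

/-- The rank of the Jacobian of `f` at `x`. -/
noncomputable def jacRank {E F : Type*} [NormedAddCommGroup E] [NormedSpace ℝ E]
    [NormedAddCommGroup F] [NormedSpace ℝ F] (f : E → F) (x : E) : ℕ :=
  Module.finrank ℝ (LinearMap.range (fderiv ℝ f x).toLinearMap)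

/-- The right-hand side of the gradient formation flow `ṗ = -R_w(p)ᵀ (r(p) - r(p*))`:
the transpose (adjoint) of the weak rigidity matrix applied to `δ(p) = r(p) - r(p*)`. -/
noncomputable def gradFlowField {n d : ℕ} (T : Set (Fin n × Fin n × Fin n))
    (pstar q : Conf n d) : Conf n d :=
  -(ContinuousLinearMap.adjoint (fderiv ℝ (weakRigidityFun T) q)
      (weakRigidityFun T q - weakRigidityFun T pstar))

set_option synthInstance.maxHeartbeats 400000
set_option maxHeartbeats 2000000

variable {n d : ℕ}

/-- projection onto the i-th agent, as a CLM -/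
noncomputable def projC (i : Fin n) : Conf n d →L[ℝ] EuclideanSpace ℝ (Fin d) :=
  (ContinuousLinearMap.proj i).comp
    (PiLp.continuousLinearEquiv 2 ℝ (fun _ : Fin n => EuclideanSpace ℝ (Fin d))).toContinuousLinearMap

@[simp] lemma projC_apply (i : Fin n) (q : Conf n d) : projC i q = q i := rfl

open Classical in
/-- Candidate derivative of the weak rigidity function. -/
noncomputable def rigidDeriv (T : Set (Fin n × Fin n × Fin n)) (q : Conf n d) :
    Conf n d →L[ℝ] EuclideanSpace ℝ (Fin n × Fin n × Fin n) :=
  ((PiLp.continuousLinearEquiv 2 ℝ (fun _ : Fin n × Fin n × Fin n => ℝ)).symm.toContinuousLinearMap).comp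
    (ContinuousLinearMap.pi fun t =>
      if t ∈ T then
        (fderivInnerCLM ℝ (q t.1 - q t.2.1, q t.1 - q t.2.2)).comp
          (ContinuousLinearMap.prod (projC t.1 - projC t.2.1) (projC t.1 - projC t.2.2))
      else 0)

open Classical in
lemma rigidDeriv_apply (T : Set (Fin n × Fin n × Fin n)) (q c : Conf n d)
    (t : Fin n × Fin n × Fin n) :
    rigidDeriv T q c t = if t ∈ T then
      ⟪q t.1 - q t.2.1, c t.1 - c t.2.2⟫ + ⟪c t.1 - c t.2.1, q t.1 - q t.2.2⟫ else 0 := by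
  simp [rigidDeriv, ContinuousLinearMap.pi_apply]
  split <;> simp [fderivInnerCLM_apply]

lemma hasFDerivAt_weakRigidityFun (T : Set (Fin n × Fin n × Fin n)) (q : Conf n d) :
    HasFDerivAt (weakRigidityFun T) (rigidDeriv T q) q := by
  classical
  have h1 : HasFDerivAt
      (fun (q : Conf n d) (t : Fin n × Fin n × Fin n) =>
        if t ∈ T then ⟪q t.1 - q t.2.1, q t.1 - q t.2.2⟫ else (0:ℝ))
      (ContinuousLinearMap.pi fun t =>
        if t ∈ T then
          (fderivInnerCLM ℝ (q t.1 - q t.2.1, q t.1 - q t.2.2)).comp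
            (ContinuousLinearMap.prod (projC t.1 - projC t.2.1) (projC t.1 - projC t.2.2))
        else 0) q := by
    rw [hasFDerivAt_pi]
    intro t
    by_cases ht : t ∈ T
    · simp only [if_pos ht]
      have hf : HasFDerivAt (fun q : Conf n d => q t.1 - q t.2.1)
          (projC t.1 - projC t.2.1) q := by
        have := ((projC (d := d) t.1) - (projC t.2.1)).hasFDerivAt (x := q)
        exact this
      have hg : HasFDerivAt (fun q : Conf n d => q t.1 - q t.2.2)
          (projC t.1 - projC t.2.2) q := by
        have := ((projC (d := d) t.1) - (projC t.2.2)).hasFDerivAt (x := q)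
        exact this
      exact hf.inner ℝ hg
    · simp only [if_neg ht]
      exact hasFDerivAt_const _ _
  have h2 := ((PiLp.continuousLinearEquiv 2 ℝ
      (fun _ : Fin n × Fin n × Fin n => ℝ)).symm.toContinuousLinearMap.hasFDerivAt).comp q h1
  exact h2

lemma inner_gradFlowField (T : Set (Fin n × Fin n × Fin n)) (pstar q c : Conf n d) :
    ⟪gradFlowField T pstar q, c⟫ =
      -⟪weakRigidityFun T q - weakRigidityFun T pstar, rigidDeriv T q c⟫ := by
  rw [gradFlowField, (hasFDerivAt_weakRigidityFun T q).fderiv, inner_neg_left,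
    ContinuousLinearMap.adjoint_inner_left]

lemma sum_gradFlowField (T : Set (Fin n × Fin n × Fin n)) (pstar q : Conf n d) :
    ∑ i : Fin n, gradFlowField T pstar q i = 0 := by
  classical
  set F := gradFlowField T pstar q with hF
  have key : ∀ w : EuclideanSpace ℝ (Fin d), ⟪∑ i : Fin n, F i, w⟫ = 0 := by
    intro w
    have h0 : ⟪F, (WithLp.toLp 2 (fun _ => w) : Conf n d)⟫ = 0 := by
      rw [hF, inner_gradFlowField]
      have : ∀ t, rigidDeriv T q (WithLp.toLp 2 (fun _ => w) : Conf n d) t = 0 := by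
        intro t
        rw [rigidDeriv_apply]
        split <;> simp
      rw [show (rigidDeriv T q (WithLp.toLp 2 (fun _ => w) : Conf n d)) = 0 from PiLp.ext this]
      simp
    rw [sum_inner]
    rw [PiLp.inner_apply] at h0
    exact h0
  have := key (∑ i : Fin n, F i)
  rwa [inner_self_eq_zero] at this

lemma piLp2_norm_apply_le {ι : Type*} [Fintype ι] {E : ι → Type*}
    [∀ i, SeminormedAddCommGroup (E i)] (x : PiLp 2 E) (i : ι) : ‖x i‖ ≤ ‖x‖ := by
  have h : ‖x i‖ ^ 2 ≤ ‖x‖ ^ 2 := by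
    rw [PiLp.norm_sq_eq_of_L2]
    exact Finset.single_le_sum (f := fun j => ‖x j‖ ^ 2)
      (fun j _ => by positivity) (Finset.mem_univ i)
  have := Real.sqrt_le_sqrt h
  simpa [Real.sqrt_sq, norm_nonneg] using this

section helpers
variable {E : Type*} [NormedAddCommGroup E] [NormedSpace ℝ E]

lemma const_of_deriv_zero {f : ℝ → E} {f' : ℝ → E}
    (hd : ∀ t, 0 ≤ t → HasDerivAt f (f' t) t) (hz : ∀ t, 0 ≤ t → f' t = 0) :
    ∀ s t : ℝ, 0 ≤ s → 0 ≤ t → f s = f t := by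
  have key : ∀ s t : ℝ, 0 ≤ s → s ≤ t → f t = f s := by
    intro s t hs hst
    refine constant_of_has_deriv_right_zero
      (fun x hx => (hd x (le_trans hs hx.1)).continuousAt.continuousWithinAt)
      (fun x hx => ?_) t ⟨hst, le_refl t⟩
    have h := (hd x (le_trans hs hx.1)).hasDerivWithinAt (s := Set.Ici x)
    rwa [hz x (le_trans hs hx.1)] at h
  intro s t hs ht
  rcases le_total s t with h | h
  · exact (key s t hs h).symm
  · exact key t s ht h

lemma gronwall_zero_fwd {f f' : ℝ → E} {a b K : ℝ}
    (hd : ∀ t ∈ Set.Icc a b, HasDerivAt f (f' t) t)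
    (hb : ∀ t ∈ Set.Icc a b, ‖f' t‖ ≤ K * ‖f t‖)
    (h0 : f a = 0) : ∀ t ∈ Set.Icc a b, f t = 0 := by
  intro t ht
  have hcont : ContinuousOn f (Set.Icc a b) :=
    fun x hx => (hd x hx).continuousAt.continuousWithinAt
  have h := norm_le_gronwallBound_of_norm_deriv_right_le (δ := 0) (K := K) (ε := 0) hcont
    (fun x hx => (hd x (Set.Ico_subset_Icc_self hx)).hasDerivWithinAt)
    (by simp [h0]) (fun x hx => by simpa using hb x (Set.Ico_subset_Icc_self hx)) t ht
  rw [gronwallBound_ε0_δ0] at h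
  exact norm_le_zero_iff.1 h

lemma gronwall_zero_bwd {f f' : ℝ → E} {a b K : ℝ}
    (hd : ∀ t ∈ Set.Icc a b, HasDerivAt f (f' t) t)
    (hb : ∀ t ∈ Set.Icc a b, ‖f' t‖ ≤ K * ‖f t‖)
    (h0 : f b = 0) : ∀ t ∈ Set.Icc a b, f t = 0 := by
  intro t ht
  set g : ℝ → E := fun u => f (a + b - u) with hg
  have hmem : ∀ u ∈ Set.Icc a b, a + b - u ∈ Set.Icc a b := by
    intro u hu
    exact ⟨by linarith [hu.2], by linarith [hu.1]⟩
  have hgd : ∀ u ∈ Set.Icc a b, HasDerivAt g (-f' (a + b - u)) u := by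
    intro u hu
    have h1 : HasDerivAt (fun u : ℝ => a + b - u) (-1) u := by
      simpa using (hasDerivAt_id u).const_sub (a + b)
    have := (hd _ (hmem u hu)).scomp u h1
    simpa [Function.comp_def, hg] using this
  have hgb : ∀ u ∈ Set.Icc a b, ‖-f' (a + b - u)‖ ≤ K * ‖g u‖ := by
    intro u hu
    simpa [hg] using hb _ (hmem u hu)
  have hg0 : g a = 0 := by simp [hg, h0]
  have := gronwall_zero_fwd hgd hgb hg0 (a + b - t) (hmem t ht)
  simpa [hg, show a + b - (a + b - t) = t by ring] using this

end helpers

section proj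
variable (W : Submodule ℝ (EuclideanSpace ℝ (Fin d)))

/-- Projection onto `Wᗮ` as an endomorphism. -/
noncomputable def projOrth : EuclideanSpace ℝ (Fin d) →L[ℝ] EuclideanSpace ℝ (Fin d) :=
  Wᗮ.subtypeL.comp (Submodule.orthogonalProjectionOnto Wᗮ)

lemma projOrth_mem (x : EuclideanSpace ℝ (Fin d)) : projOrth W x ∈ Wᗮ := by
  simp [projOrth]

lemma inner_projOrth_right (x : EuclideanSpace ℝ (Fin d)) {u : EuclideanSpace ℝ (Fin d)}
    (hu : u ∈ Wᗮ) : ⟪x, u⟫ = ⟪projOrth W x, u⟫ := by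
  have hmem : x - projOrth W x ∈ Wᗮᗮ := Submodule.sub_starProjection_mem_orthogonal (K := Wᗮ) x
  have h0 : ⟪x - projOrth W x, u⟫ = 0 := Submodule.inner_left_of_mem_orthogonal hu hmem
  rw [inner_sub_left, sub_eq_zero] at h0
  linarith [h0]

/-- Componentwise projection onto `Wᗮ` on configuration space. -/
noncomputable def projConf : Conf n d →L[ℝ] Conf n d :=
  ((PiLp.continuousLinearEquiv 2 ℝ
    (fun _ : Fin n => EuclideanSpace ℝ (Fin d))).symm.toContinuousLinearMap).comp
    (ContinuousLinearMap.pi fun i => (projOrth W).comp (projC i))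

@[simp] lemma projConf_apply (q : Conf n d) (i : Fin n) :
    projConf W q i = projOrth W (q i) := rfl

lemma projConf_eq_zero_iff (q : Conf n d) :
    projConf W q = 0 ↔ ∀ i, q i ∈ Wᗮᗮ := by
  constructor
  · intro h i
    have : projOrth W (q i) = 0 := by
      have := congrArg (fun x : Conf n d => x i) h
      simpa using this
    have h2 : (Submodule.orthogonalProjectionOnto Wᗮ (q i) : EuclideanSpace ℝ (Fin d)) = 0 := this
    rw [← Submodule.orthogonalProjectionOnto_eq_zero_iff (K := Wᗮ)]
    exact Subtype.coe_injective h2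
  · intro h
    refine PiLp.ext fun i => ?_
    show projOrth W (q i) = 0
    have := (Submodule.orthogonalProjectionOnto_eq_zero_iff (K := Wᗮ)).2 (h i)
    simp [projOrth, this]

end proj

section bound
variable (T : Set (Fin n × Fin n × Fin n)) (pstar : Conf n d)
  (W : Submodule ℝ (EuclideanSpace ℝ (Fin d)))

lemma flow_rigid_term_bound (q : Conf n d) (t : Fin n × Fin n × Fin n) :
    |rigidDeriv T q (projConf W (gradFlowField T pstar q)) t| ≤
      8 * ‖projConf W q‖ * ‖projConf W (gradFlowField T pstar q)‖ := by
  set c := projConf W (gradFlowField T pstar q) with hc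
  set g := projConf W q with hgdef
  have hgn : ∀ i j : Fin n, ‖g i - g j‖ ≤ 2 * ‖g‖ := fun i j =>
    (norm_sub_le _ _).trans (by
      have := piLp2_norm_apply_le g i
      have := piLp2_norm_apply_le g j
      linarith)
  have hcn : ∀ i j : Fin n, ‖c i - c j‖ ≤ 2 * ‖c‖ := fun i j =>
    (norm_sub_le _ _).trans (by
      have := piLp2_norm_apply_le c i
      have := piLp2_norm_apply_le c j
      linarith)
  rw [rigidDeriv_apply]
  split
  · have hcm : ∀ i j : Fin n, c i - c j ∈ Wᗮ := fun i j =>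
      Submodule.sub_mem _ (projOrth_mem W _) (projOrth_mem W _)
    have e1 : ⟪q t.1 - q t.2.1, c t.1 - c t.2.2⟫ = ⟪g t.1 - g t.2.1, c t.1 - c t.2.2⟫ := by
      rw [inner_projOrth_right W _ (hcm t.1 t.2.2)]
      simp [hgdef, map_sub]
    have e2 : ⟪c t.1 - c t.2.1, q t.1 - q t.2.2⟫ = ⟪c t.1 - c t.2.1, g t.1 - g t.2.2⟫ := by
      rw [real_inner_comm, inner_projOrth_right W _ (hcm t.1 t.2.1), real_inner_comm]
      simp [hgdef, map_sub]
    rw [e1, e2]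
    have b1 : |⟪g t.1 - g t.2.1, c t.1 - c t.2.2⟫| ≤ (2 * ‖g‖) * (2 * ‖c‖) :=
      (abs_real_inner_le_norm _ _).trans
        (mul_le_mul (hgn _ _) (hcn _ _) (norm_nonneg _) (by positivity))
    have b2 : |⟪c t.1 - c t.2.1, g t.1 - g t.2.2⟫| ≤ (2 * ‖c‖) * (2 * ‖g‖) :=
      (abs_real_inner_le_norm _ _).trans
        (mul_le_mul (hcn _ _) (hgn _ _) (norm_nonneg _) (by positivity))
    calc |⟪g t.1 - g t.2.1, c t.1 - c t.2.2⟫ + ⟪c t.1 - c t.2.1, g t.1 - g t.2.2⟫|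
        ≤ |⟪g t.1 - g t.2.1, c t.1 - c t.2.2⟫| + |⟪c t.1 - c t.2.1, g t.1 - g t.2.2⟫| :=
          abs_add_le _ _
      _ ≤ (2 * ‖g‖) * (2 * ‖c‖) + (2 * ‖c‖) * (2 * ‖g‖) := add_le_add b1 b2
      _ = 8 * ‖g‖ * ‖c‖ := by ring
  · simp
    positivity

set_option maxHeartbeats 1000000 in
lemma projConf_flow_bound (q : Conf n d) :
    ‖projConf W (gradFlowField T pstar q)‖ ≤
      (8 * ∑ t : Fin n × Fin n × Fin n,
        |(weakRigidityFun T q - weakRigidityFun T pstar) t|) * ‖projConf W q‖ := by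
  classical
  set F := gradFlowField T pstar q with hFdef
  set c := projConf W F with hc
  set g := projConf W q with hgdef
  set δv := weakRigidityFun T q - weakRigidityFun T pstar with hδ
  have hsq : ‖c‖ ^ 2 = ⟪F, c⟫ := by
    rw [PiLp.inner_apply]
    have : ∀ i, ⟪F i, c i⟫ = ⟪c i, c i⟫ := by
      intro i
      show ⟪F i, projOrth W (F i)⟫ = _
      rw [inner_projOrth_right W (F i) (projOrth_mem W (F i))]
      rfl
    rw [Finset.sum_congr rfl fun i _ => this i]
    rw [show ∑ i : Fin n, ⟪c i, c i⟫ = ⟪c, c⟫ from (PiLp.inner_apply c c).symm]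
    rw [real_inner_self_eq_norm_sq]
  have habs : |⟪F, c⟫| ≤ (8 * ∑ t, |δv t|) * ‖g‖ * ‖c‖ := by
    rw [hFdef, inner_gradFlowField, abs_neg]
    have h1 : ⟪δv, rigidDeriv T q c⟫ = ∑ t, δv t * rigidDeriv T q c t := by
      rw [PiLp.inner_apply]
      simp [RCLike.inner_apply, mul_comm]
    rw [← hδ, h1]
    calc |∑ t, δv t * rigidDeriv T q c t| ≤ ∑ t, |δv t * rigidDeriv T q c t| :=
          Finset.abs_sum_le_sum_abs _ _
      _ ≤ ∑ t, |δv t| * (8 * ‖g‖ * ‖c‖) := by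
          refine Finset.sum_le_sum fun t _ => ?_
          rw [abs_mul]
          exact mul_le_mul_of_nonneg_left
            (by simpa [hc, hgdef, hFdef] using flow_rigid_term_bound T pstar W q t)
            (abs_nonneg _)
      _ = (8 * ∑ t, |δv t|) * ‖g‖ * ‖c‖ := by rw [← Finset.sum_mul]; ring
  rcases eq_or_lt_of_le (norm_nonneg c) with h0 | h0
  · rw [← h0]
    have : (0:ℝ) ≤ ∑ t, |δv t| := Finset.sum_nonneg fun t _ => abs_nonneg _
    positivity
  · have : ‖c‖ ^ 2 ≤ (8 * ∑ t, |δv t|) * ‖g‖ * ‖c‖ := by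
      rw [hsq]
      exact (le_abs_self _).trans habs
    have h2 : ‖c‖ * ‖c‖ ≤ ((8 * ∑ t, |δv t|) * ‖g‖) * ‖c‖ := by
      rw [← sq]; linarith
    have := le_of_mul_le_mul_right h2 h0
    linarith

lemma weakRigidityFun_continuous (T : Set (Fin n × Fin n × Fin n)) :
    Continuous (weakRigidityFun (n := n) (d := d) T) :=
  continuous_iff_continuousAt.2 fun q =>
    (hasFDerivAt_weakRigidityFun T q).differentiableAt.continuousAt

lemma trajectory_mem (T : Set (Fin n × Fin n × Fin n)) (pstar : Conf n d)
    (p : ℝ → Conf n d)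
    (hflow : ∀ t : ℝ, 0 ≤ t → HasDerivAt p (gradFlowField T pstar (p t)) t) :
    ∀ s t : ℝ, 0 ≤ s → 0 ≤ t → ∀ i,
      p t i ∈ Submodule.span ℝ (Set.range (p s)) := by
  intro s t hs ht i
  classical
  set W := Submodule.span ℝ (Set.range (p s)) with hW
  set f : ℝ → Conf n d := fun u => projConf W (p u) with hf
  set a := min s t with hadef
  set b := max s t with hbdef
  have ha0 : 0 ≤ a := le_min hs ht
  have hd : ∀ u ∈ Set.Icc a b,
      HasDerivAt f (projConf W (gradFlowField T pstar (p u))) u := fun u hu =>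
    ((projConf W).hasFDerivAt).comp_hasDerivAt u (hflow u (ha0.trans hu.1))
  have hpc : ContinuousOn p (Set.Icc a b) := fun u hu =>
    (hflow u (ha0.trans hu.1)).continuousAt.continuousWithinAt
  set Kf : ℝ → ℝ := fun u =>
    8 * ∑ τ : Fin n × Fin n × Fin n,
      |(weakRigidityFun T (p u) - weakRigidityFun T pstar) τ| with hKf
  have hKcont : ContinuousOn Kf (Set.Icc a b) := by
    apply ContinuousOn.mul continuousOn_const
    apply continuousOn_finset_sum
    intro τ _
    apply ContinuousOn.abs
    have hcomp : Continuous fun q : Conf n d =>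
        (weakRigidityFun T q - weakRigidityFun T pstar) τ := by
      have : Continuous fun q : Conf n d => weakRigidityFun T q τ := by
        have h1 : Continuous fun v : EuclideanSpace ℝ (Fin n × Fin n × Fin n) => v τ := by
          exact (ContinuousLinearMap.proj (R := ℝ) (φ := fun _ : Fin n × Fin n × Fin n => ℝ) τ).continuous.comp
            (PiLp.continuousLinearEquiv 2 ℝ
              (fun _ : Fin n × Fin n × Fin n => ℝ)).continuous
        exact h1.comp (weakRigidityFun_continuous T)
      exact (this.sub (continuous_const (y := weakRigidityFun T pstar τ))).congr fun q => by simp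
    exact hcomp.comp_continuousOn hpc
  obtain ⟨K, hK⟩ := (isCompact_Icc).exists_bound_of_continuousOn hKcont
  have hb' : ∀ u ∈ Set.Icc a b,
      ‖projConf W (gradFlowField T pstar (p u))‖ ≤ K * ‖f u‖ := by
    intro u hu
    refine (projConf_flow_bound T pstar W (p u)).trans ?_
    refine mul_le_mul_of_nonneg_right (le_trans (le_abs_self (Kf u)) ?_) (norm_nonneg _)
    exact hK u hu
  have h0 : f s = 0 := by
    rw [hf]
    refine (projConf_eq_zero_iff W (p s)).2 fun j => ?_
    exact Submodule.le_orthogonal_orthogonal W (Submodule.subset_span ⟨j, rfl⟩)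
  have hft : f t = 0 := by
    rcases le_total s t with hle | hle
    · have hab : a = s ∧ b = t := ⟨min_eq_left hle, max_eq_right hle⟩
      exact gronwall_zero_fwd hd hb' (by rw [hab.1]; exact h0) t
        ⟨hab.1 ▸ hle, hab.2 ▸ le_refl t⟩
    · have hab : a = t ∧ b = s := ⟨min_eq_right hle, max_eq_left hle⟩
      exact gronwall_zero_bwd hd hb' (by rw [hab.2]; exact h0) t
        ⟨hab.1 ▸ le_refl t, hab.2 ▸ hle⟩
  have := (projConf_eq_zero_iff W (p t)).1 hft i
  rwa [Submodule.orthogonal_orthogonal] at this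

end bound

noncomputable def sumC : Conf n d →L[ℝ] EuclideanSpace ℝ (Fin d) := ∑ i : Fin n, projC i

@[simp] lemma sumC_apply (q : Conf n d) : sumC q = ∑ i : Fin n, q i := by
  simp [sumC, ContinuousLinearMap.sum_apply]

/-- Along any solution of the gradient flow
`ṗ = -R_w(p)ᵀ (r(p) - r(p*))`: (ii) the centroid `(1/n) ∑ i, p_i(t)` is constant, and
(iii) the rank of the `d × n` matrix `P(t) = (p_1(t), …, p_n(t))` is constant. -/
theorem stmt17 {n d : ℕ} (G : SimpleGraph (Fin n)) (T : Set (Fin n × Fin n × Fin n))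
    (hT : ValidTriples G T) (pstar : Conf n d) (p : ℝ → Conf n d)
    (hflow : ∀ t : ℝ, 0 ≤ t → HasDerivAt p (gradFlowField T pstar (p t)) t) :
    (∀ s t : ℝ, 0 ≤ s → 0 ≤ t →
        (n : ℝ)⁻¹ • ∑ i : Fin n, p s i = (n : ℝ)⁻¹ • ∑ i : Fin n, p t i) ∧
    (∀ s t : ℝ, 0 ≤ s → 0 ≤ t →
        (Matrix.of fun (a : Fin d) (i : Fin n) => p s i a).rank =
          (Matrix.of fun (a : Fin d) (i : Fin n) => p t i a).rank) := by
  constructor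
  · -- centroid
    intro s t hs ht
    have hg : ∀ u : ℝ, 0 ≤ u →
        HasDerivAt (fun u => sumC (p u)) (sumC (gradFlowField T pstar (p u))) u :=
      fun u hu => (sumC.hasFDerivAt).comp_hasDerivAt u (hflow u hu)
    have hz : ∀ u : ℝ, 0 ≤ u → sumC (gradFlowField T pstar (p u)) = 0 := by
      intro u hu
      rw [sumC_apply]
      exact sum_gradFlowField T pstar (p u)
    have := const_of_deriv_zero hg hz s t hs ht
    rw [sumC_apply, sumC_apply] at this
    rw [this]
  · -- rank
    intro s t hs ht
    have hspan : Submodule.span ℝ (Set.range (p s)) = Submodule.span ℝ (Set.range (p t)) := by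
      apply le_antisymm
      · rw [Submodule.span_le]
        rintro _ ⟨i, rfl⟩
        exact trajectory_mem T pstar p hflow t s ht hs i
      · rw [Submodule.span_le]
        rintro _ ⟨i, rfl⟩
        exact trajectory_mem T pstar p hflow s t hs ht i
    have hrank : ∀ u : ℝ,
        (Matrix.of fun (a : Fin d) (i : Fin n) => p u i a).rank =
          Module.finrank ℝ (Submodule.span ℝ (Set.range (p u))) := by
      intro u
      rw [Matrix.rank_eq_finrank_span_cols]
      have hmap : Submodule.span ℝ
            (Set.range (Matrix.col (Matrix.of fun (a : Fin d) (i : Fin n) => p u i a))) =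
          Submodule.map (WithLp.linearEquiv 2 ℝ (∀ _ : Fin d, ℝ)).toLinearMap
            (Submodule.span ℝ (Set.range (p u))) := by
        rw [Submodule.map_span]
        congr 1
        rw [← Set.range_comp]
        rfl
      rw [hmap, LinearEquiv.finrank_map_eq]
    rw [hrank s, hrank t, hspan]
end

section
/- Let n = d+1 agents in ℝ^d evolve according to the gradient flow ṗ = −R_w(p)ᵀ(r(p)−r(p*)), where the target framework (G_f,p*) with triple set T*_{G_f} = {(i,j,k) : (i,j),(i,k) ∈ E_f, j = k or (j,k) ∈ E_s, j ≤ k} (with E_f ⊆ E_s) is minimally infinitesimally weakly rigid, and suppose p_1(0),…,p_n(0) do not lie in a hyperplane of ℝ^d (their affine span is ℝ^d). Then for all t ≥ 0: (i) (G_f,p(t)) is infinitesimally weakly rigid, i.e. rank R_w(p(t)) = nd − d(d+1)/2; and (ii) no collisions occur, i.e. p_i(t) ≠ p_j(t) for all distinct i,j ∈ V. -/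
open RealInnerProductSpace Topology

/-- `(G,p)` is infinitesimally weakly rigid: for some valid triple set `T`, the weak
rigidity matrix has rank `n*d - d*(d+1)/2`. -/
def IsInfWeaklyRigid {n d : ℕ} (G : SimpleGraph (Fin n)) (p : Conf n d) : Prop :=
  ∃ T : Set (Fin n × Fin n × Fin n), ValidTriples G T ∧
    jacRank (weakRigidityFun T) p + d * (d + 1) / 2 = n * d

set_option synthInstance.maxHeartbeats 400000
set_option maxHeartbeats 1000000

namespace Stmt18Aux

variable {d : ℕ}

noncomputable section

/-- The Gram bilinear map as an iterated linear map. -/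
def gramL (d : ℕ) :
    Conf (d+1) d →ₗ[ℝ] Conf (d+1) d →ₗ[ℝ] EuclideanSpace ℝ (Fin (d+1) × Fin (d+1)) :=
  LinearMap.mk₂ ℝ
    (fun x y => (WithLp.toLp 2 (fun ab : Fin (d+1) × Fin (d+1) => ⟪x ab.1 - x 0, y ab.2 - y 0⟫) :
      EuclideanSpace ℝ (Fin (d+1) × Fin (d+1))))
    (fun x x' y => by
      ext ab
      simp only [PiLp.add_apply]
      rw [add_sub_add_comm, inner_add_left])
    (fun c x y => by
      ext ab
      simp only [PiLp.smul_apply]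
      rw [← smul_sub, real_inner_smul_left]
      rfl)
    (fun x y y' => by
      ext ab
      simp only [PiLp.add_apply]
      rw [add_sub_add_comm, inner_add_right])
    (fun c x y => by
      ext ab
      simp only [PiLp.smul_apply]
      rw [← smul_sub, real_inner_smul_right]
      rfl)

/-- The Gram bilinear map, as a continuous bilinear map. -/
def gramB (d : ℕ) :
    Conf (d+1) d →L[ℝ] Conf (d+1) d →L[ℝ] EuclideanSpace ℝ (Fin (d+1) × Fin (d+1)) :=
  LinearMap.toContinuousLinearMap
    (((LinearMap.toContinuousLinearMap :
        (Conf (d+1) d →ₗ[ℝ] EuclideanSpace ℝ (Fin (d+1) × Fin (d+1))) ≃ₗ[ℝ]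
        (Conf (d+1) d →L[ℝ] EuclideanSpace ℝ (Fin (d+1) × Fin (d+1)))) :
        _ →ₗ[ℝ] _) ∘ₗ gramL d)

@[simp] lemma gramB_apply (x y : Conf (d+1) d) (ab : Fin (d+1) × Fin (d+1)) :
    gramB d x y ab = ⟪x ab.1 - x 0, y ab.2 - y 0⟫ := by
  simp [gramB, gramL]

open Classical in
/-- The linear map extracting the rigidity components from the Gram matrix. -/
def triL {n : ℕ} (T : Set (Fin n × Fin n × Fin n)) :
    EuclideanSpace ℝ (Fin n × Fin n) →L[ℝ] EuclideanSpace ℝ (Fin n × Fin n × Fin n) :=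
  LinearMap.toContinuousLinearMap
  { toFun := fun M => (WithLp.toLp 2 (fun t => if t ∈ T then
        M (t.1, t.1) - M (t.1, t.2.2) - M (t.2.1, t.1) + M (t.2.1, t.2.2) else 0) :
        EuclideanSpace ℝ (Fin n × Fin n × Fin n))
    map_add' := by
      intro M N
      ext t
      by_cases h : t ∈ T <;> simp [h, PiLp.add_apply] <;> ring
    map_smul' := by
      intro c M
      ext t
      by_cases h : t ∈ T <;> simp [h, PiLp.smul_apply, smul_eq_mul] <;> ring }

open Classical in
lemma triL_apply {n : ℕ} (T : Set (Fin n × Fin n × Fin n))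
    (M : EuclideanSpace ℝ (Fin n × Fin n)) (t : Fin n × Fin n × Fin n) :
    triL T M t = if t ∈ T then
      M (t.1, t.1) - M (t.1, t.2.2) - M (t.2.1, t.1) + M (t.2.1, t.2.2) else 0 := by
  simp [triL]

lemma rig_eq (T : Set (Fin (d+1) × Fin (d+1) × Fin (d+1))) (q : Conf (d+1) d) :
    weakRigidityFun T q = triL T (gramB d q q) := by
  classical
  ext t
  rw [weakRigidityFun, triL_apply]
  by_cases h : t ∈ T
  · simp only [h, if_pos, gramB_apply]
    have e1 : q t.1 - q t.2.1 = (q t.1 - q 0) - (q t.2.1 - q 0) := by abel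
    have e2 : q t.1 - q t.2.2 = (q t.1 - q 0) - (q t.2.2 - q 0) := by abel
    simp only [e1, e2, inner_sub_left, inner_sub_right]
    ring
  · simp [h]

/-- The derivative of the Gram map at `q`. -/
def DGr (q : Conf (d+1) d) :
    Conf (d+1) d →L[ℝ] EuclideanSpace ℝ (Fin (d+1) × Fin (d+1)) :=
  gramB d q + (gramB d).flip q

lemma DGr_apply (q δ : Conf (d+1) d) (ab : Fin (d+1) × Fin (d+1)) :
    DGr q δ ab = ⟪q ab.1 - q 0, δ ab.2 - δ 0⟫ + ⟪δ ab.1 - δ 0, q ab.2 - q 0⟫ := by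
  simp [DGr, ContinuousLinearMap.add_apply, PiLp.add_apply,
    ContinuousLinearMap.flip_apply]

lemma hasFDerivAt_gram (q : Conf (d+1) d) :
    HasFDerivAt (fun q : Conf (d+1) d => gramB d q q) (DGr q) q := by
  have h := (gramB d).hasFDerivAt_of_bilinear (hasFDerivAt_id q) (hasFDerivAt_id q)
  exact h

lemma hasFDerivAt_rig (T : Set (Fin (d+1) × Fin (d+1) × Fin (d+1))) (q : Conf (d+1) d) :
    HasFDerivAt (weakRigidityFun T) ((triL T).comp (DGr q)) q := by
  have h1 : weakRigidityFun T = fun q : Conf (d+1) d => triL T (gramB d q q) :=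
    funext (rig_eq T)
  rw [h1]
  exact ((triL T).hasFDerivAt).comp q (hasFDerivAt_gram q)

lemma fderiv_rig (T : Set (Fin (d+1) × Fin (d+1) × Fin (d+1))) (q : Conf (d+1) d) :
    fderiv ℝ (weakRigidityFun T) q = (triL T).comp (DGr q) :=
  (hasFDerivAt_rig T q).fderiv

/-- Symmetric matrices with vanishing `0`-row, as a submodule of the Gram space. -/
def V0 (d : ℕ) : Submodule ℝ (EuclideanSpace ℝ (Fin (d+1) × Fin (d+1))) where
  carrier := {M | (∀ a b : Fin (d+1), M (a, b) = M (b, a)) ∧ ∀ b : Fin (d+1), M (0, b) = 0}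
  add_mem' := by
    rintro M N ⟨hM1, hM2⟩ ⟨hN1, hN2⟩
    refine ⟨fun a b => ?_, fun b => ?_⟩
    · simp only [PiLp.add_apply]
      rw [hM1 a b, hN1 a b]
    · simp only [PiLp.add_apply]
      rw [hM2 b, hN2 b, add_zero]
  zero_mem' := by
    exact ⟨fun a b => rfl, fun b => rfl⟩
  smul_mem' := by
    rintro c M ⟨hM1, hM2⟩
    refine ⟨fun a b => ?_, fun b => ?_⟩
    · simp only [PiLp.smul_apply]
      rw [hM1 a b]
    · simp only [PiLp.smul_apply]
      rw [hM2 b, smul_zero]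

lemma range_DGr_le (q : Conf (d+1) d) :
    LinearMap.range (DGr q).toLinearMap ≤ V0 d := by
  rintro M ⟨δ, rfl⟩
  constructor
  · intro a b
    have h1 := DGr_apply q δ (a, b)
    have h2 := DGr_apply q δ (b, a)
    simp only [ContinuousLinearMap.coe_coe] at *
    rw [h1, h2]
    rw [real_inner_comm (q (a,b).1 - q 0), real_inner_comm (δ (a,b).1 - δ 0)]
    ring
  · intro b
    have h1 := DGr_apply q δ (0, b)
    simp only [ContinuousLinearMap.coe_coe] at *
    rw [h1]
    simp

lemma span_of_affineSpan (q : Conf (d+1) d)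
    (hq : affineSpan ℝ (Set.range q) = ⊤) :
    Submodule.span ℝ (Set.range fun i : Fin d => q i.succ - q 0) = ⊤ := by
  have h1 : vectorSpan ℝ (Set.range q) = ⊤ := by
    rw [← direction_affineSpan, hq]
    exact AffineSubspace.direction_top ℝ _ _
  rw [vectorSpan_eq_span_vsub_set_right ℝ (Set.mem_range_self (0 : Fin (d+1)))] at h1
  have h2 : ((fun x => x -ᵥ q 0) '' Set.range q) =
      insert 0 (Set.range fun i : Fin d => q i.succ - q 0) := by
    ext x
    simp only [Set.mem_image, Set.mem_range, Set.mem_insert_iff, vsub_eq_sub]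
    constructor
    · rintro ⟨y, ⟨i, rfl⟩, rfl⟩
      induction i using Fin.cases with
      | zero => left; exact sub_self _
      | succ i => right; exact ⟨i, rfl⟩
    · rintro (rfl | ⟨i, rfl⟩)
      · exact ⟨q 0, ⟨0, rfl⟩, sub_self _⟩
      · exact ⟨q i.succ, ⟨i.succ, rfl⟩, rfl⟩
  rw [h2, Submodule.span_insert_zero] at h1
  exact h1

lemma V0_le_range (q : Conf (d+1) d)
    (hq : affineSpan ℝ (Set.range q) = ⊤) :
    V0 d ≤ LinearMap.range (DGr q).toLinearMap := by
  classical
  have hsp := span_of_affineSpan q hq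
  have hcard : Fintype.card (Fin d) =
      Module.finrank ℝ (EuclideanSpace ℝ (Fin d)) := by
    simp [finrank_euclideanSpace_fin]
  let B : Module.Basis (Fin d) ℝ (EuclideanSpace ℝ (Fin d)) :=
    basisOfTopLeSpanOfCardEqFinrank (fun i : Fin d => q i.succ - q 0) hsp.ge hcard
  rintro M ⟨hMsymm, hMrow⟩
  set w : Fin d → EuclideanSpace ℝ (Fin d) := fun a =>
    (InnerProductSpace.toDual ℝ _).symm
      (LinearMap.toContinuousLinearMap
        (B.constr ℝ (fun j : Fin d => M (a.succ, j.succ) / 2))) with hw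
  have hinner : ∀ a j : Fin d, ⟪w a, q j.succ - q 0⟫ = M (a.succ, j.succ) / 2 := by
    intro a j
    have hb : q j.succ - q 0 = B j := by
      rw [coe_basisOfTopLeSpanOfCardEqFinrank]
    rw [hb, hw]
    rw [InnerProductSpace.toDual_symm_apply]
    simp [Module.Basis.constr_basis]
  set δ : Conf (d+1) d := WithLp.toLp 2 (fun k => Fin.cases 0 w k) with hδ
  have hδ0 : δ 0 = 0 := rfl
  have hδs : ∀ a : Fin d, δ a.succ = w a := fun a => rfl
  refine ⟨δ, ?_⟩
  have key : DGr q δ = M := by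
    ext ab
    obtain ⟨a, b⟩ := ab
    rw [DGr_apply]
    dsimp only
    induction a using Fin.cases with
    | zero =>
      simp [sub_self, hMrow b]
    | succ a =>
      induction b using Fin.cases with
      | zero =>
        have hM0 : M (a.succ, (0 : Fin (d+1))) = 0 := by
          rw [hMsymm a.succ 0]; exact hMrow a.succ
        simp [hδ0, sub_self, hM0]
      | succ b =>
        rw [hδ0, hδs a, hδs b, sub_zero, sub_zero]
        have hc : ⟪q a.succ - q 0, w b⟫ = ⟪w b, q a.succ - q 0⟫ := real_inner_comm _ _
        have h1 := hinner a b
        have h2 := hinner b a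
        have h3 := hMsymm b.succ a.succ
        linarith
  simpa using key

lemma finrank_V0_le : Module.finrank ℝ (V0 d) ≤ d * (d + 1) / 2 := by
  classical
  set S := {ij : Fin (d+1) × Fin (d+1) // ij.1 ≠ 0 ∧ ij.1 ≤ ij.2} with hS
  let φ : V0 d →ₗ[ℝ] (S → ℝ) :=
    { toFun := fun M s => (M : EuclideanSpace ℝ (Fin (d+1) × Fin (d+1))) s.1
      map_add' := by intro M N; rfl
      map_smul' := by intro c M; rfl }
  have hφinj : Function.Injective φ := by
    intro M N h
    ext ab
    obtain ⟨a, b⟩ := ab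
    have happ : ∀ s : S, (M : EuclideanSpace ℝ _) s.1 = (N : EuclideanSpace ℝ _) s.1 :=
      fun s => congrFun h s
    rcases eq_or_ne a 0 with rfl | ha
    · rw [M.2.2 b, N.2.2 b]
    rcases le_total a b with hab | hba
    · exact happ ⟨(a, b), ⟨ha, hab⟩⟩
    rcases eq_or_ne b 0 with rfl | hb
    · rw [M.2.1 a 0, N.2.1 a 0, M.2.2 a, N.2.2 a]
    · rw [M.2.1 a b, N.2.1 a b]
      exact happ ⟨(b, a), ⟨hb, hba⟩⟩
  have h1 : Module.finrank ℝ (V0 d) ≤ Module.finrank ℝ (S → ℝ) :=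
    LinearMap.finrank_le_finrank_of_injective hφinj
  have h2 : Module.finrank ℝ (S → ℝ) = Fintype.card S := Module.finrank_pi ℝ
  have h3 : Fintype.card S = d * (d + 1) / 2 := by
    have e : S ≃ Σ b : Fin (d+1), {a : Fin (d+1) // a ≠ 0 ∧ a ≤ b} :=
      { toFun := fun s => ⟨s.1.2, ⟨s.1.1, s.2⟩⟩
        invFun := fun x => ⟨(x.2.1, x.1), x.2.2⟩
        left_inv := by rintro ⟨⟨a, b⟩, h⟩; rfl
        right_inv := by rintro ⟨b, ⟨a, h⟩⟩; rfl }
    rw [Fintype.card_congr e, Fintype.card_sigma]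
    have hcard : ∀ b : Fin (d+1), Fintype.card {a : Fin (d+1) // a ≠ 0 ∧ a ≤ b} = b.val := by
      intro b
      rw [Fintype.card_subtype]
      have : Finset.univ.filter (fun a : Fin (d+1) => a ≠ 0 ∧ a ≤ b) = Finset.Ioc 0 b := by
        ext a
        simp [Finset.mem_Ioc, Fin.pos_iff_ne_zero, and_comm]
      rw [this, Fin.card_Ioc]
      simp
    simp only [hcard]
    have h4 := Finset.sum_range_id_mul_two (d + 1)
    rw [Nat.add_sub_cancel] at h4
    have hsum : ∑ b : Fin (d + 1), (b : ℕ) = ∑ i ∈ Finset.range (d + 1), i :=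
      Fin.sum_univ_eq_sum_range (fun i => i) (d + 1)
    have h6 : (d + 1) * d = d * (d + 1) := Nat.mul_comm _ _
    rw [hsum]
    omega
  omega

lemma jacRank_rig (T : Set (Fin (d+1) × Fin (d+1) × Fin (d+1))) (q : Conf (d+1) d) :
    jacRank (weakRigidityFun T) q =
      Module.finrank ℝ ((LinearMap.range (DGr q).toLinearMap).map (triL T).toLinearMap) := by
  rw [jacRank, fderiv_rig]
  rw [show ((triL T).comp (DGr q)).toLinearMap
      = (triL T).toLinearMap.comp (DGr q).toLinearMap from rfl]
  rw [LinearMap.range_comp]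

theorem jacRank_eq_of_span (T : Set (Fin (d+1) × Fin (d+1) × Fin (d+1)))
    (pstar q : Conf (d+1) d)
    (hrig : jacRank (weakRigidityFun T) pstar + d * (d + 1) / 2 = (d + 1) * d)
    (hq : affineSpan ℝ (Set.range q) = ⊤) :
    jacRank (weakRigidityFun T) q + d * (d + 1) / 2 = (d + 1) * d := by
  have heven : d * (d + 1) / 2 * 2 = d * (d + 1) :=
    Nat.div_mul_cancel (Nat.even_mul_succ_self d).two_dvd
  have hq_range : LinearMap.range (DGr (d := d) q).toLinearMap = V0 d :=
    le_antisymm (range_DGr_le q) (V0_le_range q hq)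
  have e1 : jacRank (weakRigidityFun T) q =
      Module.finrank ℝ ((V0 d).map (triL T).toLinearMap) := by
    rw [jacRank_rig, hq_range]
  have e2 : jacRank (weakRigidityFun T) pstar ≤
      Module.finrank ℝ ((V0 d).map (triL T).toLinearMap) := by
    rw [jacRank_rig]
    exact Submodule.finrank_mono (Submodule.map_mono (range_DGr_le pstar))
  have e3 : Module.finrank ℝ ((V0 d).map (triL T).toLinearMap) ≤ d * (d + 1) / 2 :=
    le_trans (Submodule.finrank_map_le _ _) finrank_V0_le
  have hcomm : (d + 1) * d = d * (d + 1) := Nat.mul_comm _ _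
  omega

lemma inner_gradFlowField_eq_zero (T : Set (Fin (d+1) × Fin (d+1) × Fin (d+1)))
    (pstar qb : Conf (d+1) d) (v : EuclideanSpace ℝ (Fin d))
    (hv : ∀ a : Fin (d+1), ⟪v, qb a - qb 0⟫ = 0) (i : Fin (d+1)) :
    ⟪v, gradFlowField T pstar qb i⟫ = 0 := by
  classical
  set δ : Conf (d+1) d := WithLp.toLp 2 (fun k => (if k = i then (1:ℝ) else 0) • v) with hδ
  have hδk : ∀ b : Fin (d+1), δ b - δ 0
      = ((if b = i then (1:ℝ) else 0) - (if (0 : Fin (d+1)) = i then (1:ℝ) else 0)) • v := by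
    intro b
    rw [hδ, sub_smul]
  have hD : DGr qb δ = 0 := by
    ext ab
    rw [DGr_apply, PiLp.zero_apply, hδk ab.1, hδk ab.2]
    rw [real_inner_smul_right, real_inner_smul_left]
    have e1 : ⟪qb ab.1 - qb 0, v⟫ = 0 := by rw [real_inner_comm]; exact hv ab.1
    rw [e1, hv ab.2]
    ring
  have hfd : fderiv ℝ (weakRigidityFun T) qb δ = 0 := by
    rw [fderiv_rig]
    rw [ContinuousLinearMap.comp_apply, hD, map_zero]
  have key : ⟪gradFlowField T pstar qb, δ⟫ = 0 := by
    rw [gradFlowField, inner_neg_left, ContinuousLinearMap.adjoint_inner_left, hfd,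
      inner_zero_right, neg_zero]
  rw [PiLp.inner_apply] at key
  simp only [hδ, real_inner_smul_right, ite_smul, one_smul, zero_smul] at key
  rw [real_inner_comm]
  calc ⟪gradFlowField T pstar qb i, v⟫
      = ∑ k : Fin (d+1), ⟪gradFlowField T pstar qb k,
          if k = i then v else (0 : EuclideanSpace ℝ (Fin d))⟫ := by
        rw [Finset.sum_congr rfl (fun k _ => ?_)]
        · rw [Finset.sum_ite_eq' Finset.univ i
            (fun k => ⟪gradFlowField T pstar qb k, v⟫)]
          simp
        · split <;> simp
    _ = 0 := key

/-- The adjoint, as a plain `ℝ`-linear map between spaces of continuous linear maps. -/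
def adjL (d : ℕ) :
    (Conf (d+1) d →L[ℝ] EuclideanSpace ℝ (Fin (d+1) × Fin (d+1) × Fin (d+1))) →ₗ[ℝ]
    (EuclideanSpace ℝ (Fin (d+1) × Fin (d+1) × Fin (d+1)) →L[ℝ] Conf (d+1) d) where
  toFun := fun A => ContinuousLinearMap.adjoint A
  map_add' := fun A B => by simp [map_add]
  map_smul' := fun c A => by
    have := ContinuousLinearMap.adjoint.map_smulₛₗ c A
    simpa using this

set_option maxHeartbeats 4000000 in
lemma contDiff_gradFlowField (T : Set (Fin (d+1) × Fin (d+1) × Fin (d+1)))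
    (pstar : Conf (d+1) d) :
    ContDiff ℝ 2 (gradFlowField T pstar) := by
  classical
  have heq : gradFlowField T pstar = fun q : Conf (d+1) d =>
      -((LinearMap.toContinuousLinearMap (adjL d)
          (((ContinuousLinearMap.compL ℝ (Conf (d+1) d)
              (EuclideanSpace ℝ (Fin (d+1) × Fin (d+1)))
              (EuclideanSpace ℝ (Fin (d+1) × Fin (d+1) × Fin (d+1))) (triL T)).comp
            (gramB d + (gramB d).flip)) q))
        (triL T (gramB d q q) - weakRigidityFun T pstar)) := by
    funext q
    rw [gradFlowField, fderiv_rig, rig_eq]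
    rfl
  rw [heq]
  have h1 : ContDiff ℝ 2 (fun q : Conf (d+1) d =>
      (LinearMap.toContinuousLinearMap (adjL d)
        (((ContinuousLinearMap.compL ℝ (Conf (d+1) d)
            (EuclideanSpace ℝ (Fin (d+1) × Fin (d+1)))
            (EuclideanSpace ℝ (Fin (d+1) × Fin (d+1) × Fin (d+1))) (triL T)).comp
          (gramB d + (gramB d).flip)) q))) :=
    (LinearMap.toContinuousLinearMap (adjL d)).contDiff.comp
      (ContinuousLinearMap.contDiff _)
  have h2 : ContDiff ℝ 2 (fun q : Conf (d+1) d =>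
      triL T (gramB d q q) - weakRigidityFun T pstar) := by
    have h3 : ContDiff ℝ 2 (fun q : Conf (d+1) d => gramB d q q) :=
      ContDiff.clm_apply (gramB d).contDiff contDiff_id
    exact ((triL T).contDiff.comp h3).sub contDiff_const
  exact (ContDiff.clm_apply h1 h2).neg

/-- The functional measuring the deviation of a configuration from the hyperplane
with unit normal `v` through the first point. -/
def lamL (d : ℕ) (v : EuclideanSpace ℝ (Fin d)) :
    Conf (d+1) d →L[ℝ] EuclideanSpace ℝ (Fin (d+1)) :=
  LinearMap.toContinuousLinearMap
  { toFun := fun q => (WithLp.toLp 2 (fun i => ⟪v, q i - q 0⟫) : EuclideanSpace ℝ (Fin (d+1)))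
    map_add' := fun x y => by
      ext i
      simp only [PiLp.add_apply]
      rw [add_sub_add_comm, inner_add_right]
    map_smul' := fun c x => by
      ext i
      simp only [PiLp.smul_apply, RingHom.id_apply]
      rw [← smul_sub, real_inner_smul_right]
      rfl }

lemma lamL_apply (v : EuclideanSpace ℝ (Fin d)) (q : Conf (d+1) d) (i : Fin (d+1)) :
    lamL d v q i = ⟪v, q i - q 0⟫ := by
  simp [lamL]

/-- The projection of a configuration onto hyperplane configurations. -/
def projP (d : ℕ) (v : EuclideanSpace ℝ (Fin d)) (q : Conf (d+1) d) : Conf (d+1) d :=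
  WithLp.toLp 2 (fun i => q i - lamL d v q i • v)

lemma lamL_zero (v : EuclideanSpace ℝ (Fin d)) (q : Conf (d+1) d) :
    lamL d v q 0 = 0 := by
  rw [lamL_apply]
  simp

lemma projP_inner (v : EuclideanSpace ℝ (Fin d)) (hvnorm : ‖v‖ = 1)
    (q : Conf (d+1) d) (i : Fin (d+1)) :
    ⟪v, projP d v q i - projP d v q 0⟫ = 0 := by
  have h1 : projP d v q i - projP d v q 0 = (q i - q 0) - lamL d v q i • v := by
    simp only [projP, lamL_zero, zero_smul, sub_zero]
    abel
  rw [h1, inner_sub_right, real_inner_smul_right, real_inner_self_eq_norm_sq,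
    hvnorm, lamL_apply]
  ring

lemma sub_projP (v : EuclideanSpace ℝ (Fin d)) (q : Conf (d+1) d) :
    q - projP d v q = (WithLp.toLp 2 (fun i => lamL d v q i • v) : Conf (d+1) d) := by
  ext i
  rw [PiLp.sub_apply]
  simp only [projP]
  abel

lemma norm_sub_projP (v : EuclideanSpace ℝ (Fin d)) (hvnorm : ‖v‖ = 1)
    (q : Conf (d+1) d) : ‖q - projP d v q‖ = ‖lamL d v q‖ := by
  rw [sub_projP, PiLp.norm_eq_of_L2, EuclideanSpace.norm_eq]
  congr 1
  refine Finset.sum_congr rfl fun i _ => ?_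
  rw [norm_smul, hvnorm, mul_one]

lemma norm_projP_le (v : EuclideanSpace ℝ (Fin d)) (hvnorm : ‖v‖ = 1)
    (q : Conf (d+1) d) : ‖projP d v q‖ ≤ (1 + ‖lamL d v‖) * ‖q‖ := by
  have h1 : projP d v q = q - (q - projP d v q) := by abel
  calc ‖projP d v q‖ = ‖q - (q - projP d v q)‖ := by rw [← h1]
    _ ≤ ‖q‖ + ‖q - projP d v q‖ := norm_sub_le _ _
    _ = ‖q‖ + ‖lamL d v q‖ := by rw [norm_sub_projP v hvnorm]
    _ ≤ ‖q‖ + ‖lamL d v‖ * ‖q‖ := by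
        have := (lamL d v).le_opNorm q
        linarith
    _ = (1 + ‖lamL d v‖) * ‖q‖ := by ring

lemma lamL_flowField_projP (T : Set (Fin (d+1) × Fin (d+1) × Fin (d+1)))
    (pstar : Conf (d+1) d) (v : EuclideanSpace ℝ (Fin d)) (hvnorm : ‖v‖ = 1)
    (q : Conf (d+1) d) :
    lamL d v (gradFlowField T pstar (projP d v q)) = 0 := by
  ext i
  rw [lamL_apply, PiLp.zero_apply, inner_sub_right]
  rw [inner_gradFlowField_eq_zero T pstar (projP d v q) v (projP_inner v hvnorm q) i,
    inner_gradFlowField_eq_zero T pstar (projP d v q) v (projP_inner v hvnorm q) 0]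
  ring

set_option synthInstance.maxHeartbeats 1600000 in
set_option maxHeartbeats 4000000 in
/-- Hyperplane degeneracy propagates backwards in time along the flow. -/
lemma hyperplane_propagates (T : Set (Fin (d+1) × Fin (d+1) × Fin (d+1)))
    (pstar : Conf (d+1) d) (p : ℝ → Conf (d+1) d)
    (hflow : ∀ t : ℝ, 0 ≤ t → HasDerivAt p (gradFlowField T pstar (p t)) t)
    {t0 : ℝ} (ht0 : 0 ≤ t0) (v : EuclideanSpace ℝ (Fin d)) (hvnorm : ‖v‖ = 1)
    (hvt0 : ∀ i : Fin (d+1), ⟪v, p t0 i - p t0 0⟫ = 0) :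
    ∀ i : Fin (d+1), ⟪v, p 0 i - p 0 0⟫ = 0 := by
  classical
  set X := gradFlowField T pstar with hX
  set Λ := lamL d v with hΛ
  -- bounds on the trajectory
  have hpc : ContinuousOn p (Set.Icc 0 t0) := fun u hu =>
    ((hflow u hu.1).continuousAt).continuousWithinAt
  obtain ⟨Mb, hMb⟩ := IsCompact.exists_bound_of_continuousOn isCompact_Icc hpc
  have hMb0 : 0 ≤ Mb := le_trans (norm_nonneg _) (hMb 0 ⟨le_refl _, ht0⟩)
  have hΛnn : (0:ℝ) ≤ ‖Λ‖ := norm_nonneg _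
  set R : ℝ := (1 + ‖Λ‖) * (Mb + 1) with hR
  have hmem : ∀ u ∈ Set.Icc (0:ℝ) t0,
      p u ∈ Metric.closedBall (0 : Conf (d+1) d) R ∧
      projP d v (p u) ∈ Metric.closedBall (0 : Conf (d+1) d) R := by
    intro u hu
    have h1 : ‖p u‖ ≤ Mb := hMb u hu
    constructor
    · rw [Metric.mem_closedBall, dist_zero_right, hR]
      nlinarith
    · rw [Metric.mem_closedBall, dist_zero_right, hR]
      have h2 := norm_projP_le v hvnorm (p u)
      nlinarith
  -- Lipschitz bound for the field on the ball
  have hXc : ContDiff ℝ 2 X := contDiff_gradFlowField T pstar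
  obtain ⟨K, hK⟩ := IsCompact.exists_bound_of_continuousOn
    (isCompact_closedBall (0 : Conf (d+1) d) R)
    (Continuous.continuousOn (f := fderiv ℝ X)
      (hXc.fderiv_right (m := 1) (by norm_num)).continuous)
  have hXdiff : ∀ z : Conf (d+1) d, DifferentiableAt ℝ X z :=
    fun z => (hXc.differentiable (by norm_num)).differentiableAt
  have hlip : ∀ x ∈ Metric.closedBall (0 : Conf (d+1) d) R,
      ∀ y ∈ Metric.closedBall (0 : Conf (d+1) d) R, ‖X y - X x‖ ≤ K * ‖y - x‖ :=
    fun x hx y hy =>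
      (convex_closedBall (0 : Conf (d+1) d) R).norm_image_sub_le_of_norm_fderiv_le
        (fun z _ => hXdiff z) hK hx hy
  -- Gronwall, backwards in time from t0
  set f : ℝ → EuclideanSpace ℝ (Fin (d+1)) := fun u => Λ (p (t0 - u)) with hf
  have hf0 : f 0 = 0 := by
    ext i
    rw [hf]
    dsimp only
    rw [sub_zero, hΛ, lamL_apply, PiLp.zero_apply]
    exact hvt0 i
  have hfd : ∀ u ∈ Set.Ico (0:ℝ) t0,
      HasDerivWithinAt f (-(Λ (X (p (t0 - u))))) (Set.Ici u) u := by
    intro u hu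
    have h1 : HasDerivAt (fun w : ℝ => t0 - w) (-1) u := by
      simpa using (hasDerivAt_id' u).const_sub t0
    have h2 := hflow (t0 - u) (by linarith [hu.2])
    have h3 : HasDerivAt (fun w : ℝ => p (t0 - w)) ((-1 : ℝ) • X (p (t0 - u))) u :=
      HasDerivAt.scomp u h2 h1
    have h4 := Λ.hasFDerivAt.comp_hasDerivAt u h3
    have h5 : Λ ((-1 : ℝ) • X (p (t0 - u))) = -(Λ (X (p (t0 - u)))) := by
      rw [map_smul]
      simp
    rw [h5] at h4
    exact h4.hasDerivWithinAt
  have hbound : ∀ u ∈ Set.Ico (0:ℝ) t0,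
      ‖-(Λ (X (p (t0 - u))))‖ ≤ (‖Λ‖ * K) * ‖f u‖ + 0 := by
    intro u hu
    have htmem : t0 - u ∈ Set.Icc (0:ℝ) t0 := ⟨by linarith [hu.2], by linarith [hu.1]⟩
    obtain ⟨hq1, hq2⟩ := hmem (t0 - u) htmem
    have h1 : Λ (X (p (t0 - u))) = Λ (X (p (t0 - u)) - X (projP d v (p (t0 - u)))) := by
      rw [map_sub, hΛ, lamL_flowField_projP T pstar v hvnorm, sub_zero]
    have h2 : ‖X (p (t0 - u)) - X (projP d v (p (t0 - u)))‖
        ≤ K * ‖p (t0 - u) - projP d v (p (t0 - u))‖ := hlip _ hq2 _ hq1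
    calc ‖-(Λ (X (p (t0 - u))))‖
        = ‖Λ (X (p (t0 - u)) - X (projP d v (p (t0 - u))))‖ := by rw [norm_neg, h1]
      _ ≤ ‖Λ‖ * ‖X (p (t0 - u)) - X (projP d v (p (t0 - u)))‖ := Λ.le_opNorm _
      _ ≤ ‖Λ‖ * (K * ‖p (t0 - u) - projP d v (p (t0 - u))‖) :=
          mul_le_mul_of_nonneg_left h2 (norm_nonneg _)
      _ = (‖Λ‖ * K) * ‖Λ (p (t0 - u))‖ := by
          rw [hΛ, norm_sub_projP v hvnorm]; ring
      _ = (‖Λ‖ * K) * ‖f u‖ + 0 := by simp [hf]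
  have hcf : ContinuousOn f (Set.Icc 0 t0) := by
    apply Λ.continuous.comp_continuousOn
    apply hpc.comp ((continuous_const.sub continuous_id).continuousOn)
    intro u hu
    obtain ⟨hu1, hu2⟩ := Set.mem_Icc.mp hu
    show t0 - u ∈ Set.Icc 0 t0
    exact Set.mem_Icc.mpr ⟨by linarith, by linarith⟩
  have hgron := norm_le_gronwallBound_of_norm_deriv_right_le (δ := 0) (ε := 0)
    (K := ‖Λ‖ * K) hcf hfd (by rw [hf0]; simp) hbound t0 ⟨ht0, le_refl t0⟩
  rw [gronwallBound_ε0_δ0] at hgron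
  have hft0 : f t0 = 0 := norm_le_zero_iff.mp hgron
  have hΛp0 : Λ (p 0) = 0 := by
    rw [hf] at hft0
    dsimp only at hft0
    rwa [sub_self] at hft0
  intro i
  have := congrArg (fun z : EuclideanSpace ℝ (Fin (d+1)) => z i) hΛp0
  rwa [hΛ, lamL_apply] at this

theorem span_invariant (T : Set (Fin (d+1) × Fin (d+1) × Fin (d+1)))
    (pstar : Conf (d+1) d) (p : ℝ → Conf (d+1) d)
    (hflow : ∀ t : ℝ, 0 ≤ t → HasDerivAt p (gradFlowField T pstar (p t)) t)
    (hspan : affineSpan ℝ (Set.range (p 0)) = ⊤) {t0 : ℝ} (ht0 : 0 ≤ t0) :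
    affineSpan ℝ (Set.range (p t0)) = ⊤ := by
  classical
  by_contra hne
  have hmem0 : p t0 0 ∈ affineSpan ℝ (Set.range (p t0)) :=
    subset_affineSpan ℝ (Set.range (p t0)) (Set.mem_range_self 0)
  have hdir_ne : (affineSpan ℝ (Set.range (p t0))).direction ≠ ⊤ := by
    intro h
    exact hne ((AffineSubspace.direction_eq_top_iff_of_nonempty
      (s := affineSpan ℝ (Set.range (p t0))) ⟨p t0 0, hmem0⟩).mp h)
  obtain ⟨v0, hv0mem, hv0⟩ :
      ∃ v0 ∈ (affineSpan ℝ (Set.range (p t0))).directionᗮ, v0 ≠ 0 := by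
    by_contra h
    push_neg at h
    have hbot : (affineSpan ℝ (Set.range (p t0))).directionᗮ = ⊥ :=
      (Submodule.eq_bot_iff _).mpr (fun x hx => h x hx)
    exact hdir_ne (Submodule.orthogonal_eq_bot_iff.mp hbot)
  set v : EuclideanSpace ℝ (Fin d) := (‖v0‖ : ℝ)⁻¹ • v0 with hvdef
  have hvnorm : ‖v‖ = 1 := norm_smul_inv_norm hv0
  have hvmem : v ∈ (affineSpan ℝ (Set.range (p t0))).directionᗮ :=
    Submodule.smul_mem _ _ hv0mem
  have hvt0 : ∀ i : Fin (d+1), ⟪v, p t0 i - p t0 0⟫ = 0 := by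
    intro i
    have hd : p t0 i - p t0 0 ∈ (affineSpan ℝ (Set.range (p t0))).direction := by
      have := AffineSubspace.vsub_mem_direction
        (subset_affineSpan ℝ (Set.range (p t0)) (Set.mem_range_self i)) hmem0
      simpa using this
    exact Submodule.inner_left_of_mem_orthogonal hd hvmem
  have hfacts := hyperplane_propagates T pstar p hflow ht0 v hvnorm hvt0
  have hvs : Submodule.span ℝ (Set.range fun i : Fin d => p 0 i.succ - p 0 0) = ⊤ :=
    span_of_affineSpan _ hspan
  have hvmem2 : v ∈ (Submodule.span ℝ
      (Set.range fun i : Fin d => p 0 i.succ - p 0 0))ᗮ := by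
    rw [Submodule.mem_orthogonal]
    intro u hu
    induction hu using Submodule.span_induction with
    | mem x hx =>
      obtain ⟨i, rfl⟩ := hx
      rw [real_inner_comm]
      exact hfacts i.succ
    | zero => simp
    | add x y _ _ hx hy => rw [inner_add_left, hx, hy, add_zero]
    | smul c x _ hx => rw [inner_smul_left, hx, mul_zero]
  rw [hvs, Submodule.top_orthogonal_eq_bot] at hvmem2
  have hv00 : v = 0 := hvmem2
  rw [hv00] at hvnorm
  simp at hvnorm

end

end Stmt18Aux

/-- With `n = d+1` agents under the gradient flow for a minimally
infinitesimally weakly rigid target `(G_f, p*)` with the triple set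
`T = {(i,j,k) : (i,j),(i,k) ∈ E_f, j ≤ k, (j = k or (j,k) ∈ E_s)}` (`E_f ⊆ E_s`), if
the initial positions do not lie in a hyperplane, then for all `t ≥ 0`:
(i) `(G_f, p(t))` is infinitesimally weakly rigid (`rank R_w(p(t)) = nd - d(d+1)/2`),
and (ii) no two agents ever collide. -/
theorem stmt18 {n d : ℕ} (hn : n = d + 1) (Gf Gs : SimpleGraph (Fin n)) (hsub : Gf ≤ Gs)
    (T : Set (Fin n × Fin n × Fin n))
    (hTdef : T = {t : Fin n × Fin n × Fin n | Gf.Adj t.1 t.2.1 ∧ Gf.Adj t.1 t.2.2 ∧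
      t.2.1 ≤ t.2.2 ∧ (t.2.1 = t.2.2 ∨ Gs.Adj t.2.1 t.2.2)})
    (pstar : Conf n d)
    (hrig : jacRank (weakRigidityFun T) pstar + d * (d + 1) / 2 = n * d)
    (hmin : ∀ i j : Fin n, Gf.Adj i j →
      ¬ IsInfWeaklyRigid (Gf.deleteEdges {s(i, j)}) pstar)
    (p : ℝ → Conf n d)
    (hflow : ∀ t : ℝ, 0 ≤ t → HasDerivAt p (gradFlowField T pstar (p t)) t)
    (hspan : affineSpan ℝ (Set.range (p 0)) = ⊤) :
    ∀ t : ℝ, 0 ≤ t →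
      (jacRank (weakRigidityFun T) (p t) + d * (d + 1) / 2 = n * d) ∧
      (∀ i j : Fin n, i ≠ j → p t i ≠ p t j) := by
  subst hn
  intro t ht
  have hsp : affineSpan ℝ (Set.range (p t)) = ⊤ :=
    Stmt18Aux.span_invariant T pstar p hflow hspan ht
  refine ⟨Stmt18Aux.jacRank_eq_of_span T pstar (p t) hrig hsp, ?_⟩
  intro i j hij heq
  classical
  have hd1 : 1 ≤ d := by
    by_contra hd
    push_neg at hd
    have hi := i.isLt
    have hj := j.isLt
    exact hij (Fin.ext (by omega))
  have himg : p t '' ↑(Finset.univ.erase i) = Set.range (p t) := by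
    ext x
    constructor
    · rintro ⟨k, _, rfl⟩
      exact ⟨k, rfl⟩
    · rintro ⟨k, rfl⟩
      by_cases hk : k = i
      · refine ⟨j, ?_, ?_⟩
        · simp [Finset.mem_erase]
          exact fun h => hij h.symm
        · rw [hk, heq]
      · exact ⟨k, by simp [Finset.mem_erase, hk], rfl⟩
  have hcard : (Finset.univ.erase i).card = (d - 1) + 1 := by
    rw [Finset.card_erase_of_mem (Finset.mem_univ i), Finset.card_univ, Fintype.card_fin]
    omega
  have hle := finrank_vectorSpan_image_finset_le ℝ (p t) (Finset.univ.erase i) hcard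
  rw [Finset.coe_image, himg] at hle
  have htop : vectorSpan ℝ (Set.range (p t)) = ⊤ := by
    rw [← direction_affineSpan, hsp]
    exact AffineSubspace.direction_top ℝ _ _
  rw [htop] at hle
  have hfr : Module.finrank ℝ
      (⊤ : Submodule ℝ (EuclideanSpace ℝ (Fin d))) = d := by
    rw [finrank_top, finrank_euclideanSpace_fin]
  omega
end
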